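/- arXiv:2507.09131 — 3 statements merged into one kernel-verified Lean document; each statement's English description precedes it below -/
import Mathlib

section
/- Let ρ₁, …, ρ_N be real node densities, let ω₁, …, ω_N be positive weights with Σᵢ ωᵢ = 1, and let ρ̄ = Σᵢ ωᵢ ρᵢ be the cell average. Let ρ_min = minᵢ ρᵢ, let 0 < ε ≤ ρ̄, assume ρ_min < ρ̄, and set θ₁ = min{(ρ̄ − ε)/(ρ̄ − ρ_min), 1}. Then θ₁ ∈ [0,1] and the limited densities ρ̂ᵢ = θ₁(ρᵢ − ρ̄) + ρ̄ satisfy ρ̂ᵢ ≥ ε for every i. -/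
/-- The Zhang–Shu density limiting step: the scaling factor `θ₁` lies in `[0,1]`
and the limited densities `ρ̂ᵢ = θ₁ (ρᵢ − ρ̄) + ρ̄` are bounded below by `ε`. -/
theorem zhangShu_density_limiter {N : ℕ}
    (hne : (Finset.univ : Finset (Fin N)).Nonempty)
    (ρ ω : Fin N → ℝ) (hω : ∀ i, 0 < ω i) (hsum : ∑ i, ω i = 1)
    (ρbar : ℝ) (hbar : ρbar = ∑ i, ω i * ρ i)
    (ρmin : ℝ) (hmin : ρmin = Finset.univ.inf' hne ρ)
    (ε : ℝ) (hε : 0 < ε) (hερ : ε ≤ ρbar)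
    (hlt : ρmin < ρbar)
    (θ₁ : ℝ) (hθ₁ : θ₁ = min ((ρbar - ε) / (ρbar - ρmin)) 1) :
    (0 ≤ θ₁ ∧ θ₁ ≤ 1) ∧ ∀ i, ε ≤ θ₁ * (ρ i - ρbar) + ρbar := by
  have hd : 0 < ρbar - ρmin := by linarith
  have hθ0 : 0 ≤ θ₁ := by
    rw [hθ₁]
    exact le_min (div_nonneg (by linarith) hd.le) zero_le_one
  have hθle : θ₁ ≤ (ρbar - ε) / (ρbar - ρmin) := hθ₁ ▸ min_le_left _ _
  have hθ1 : θ₁ ≤ 1 := hθ₁ ▸ min_le_right _ _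
  refine ⟨⟨hθ0, hθ1⟩, fun i => ?_⟩
  have hρmin : ρmin ≤ ρ i := hmin ▸ Finset.inf'_le _ (Finset.mem_univ i)
  have hc : (ρbar - ε) / (ρbar - ρmin) * (ρbar - ρmin) = ρbar - ε := by
    field_simp
  rcases le_or_gt ρbar (ρ i) with h | h
  · nlinarith
  · have h1 : θ₁ * (ρ i - ρbar) ≥ (ρbar - ε) / (ρbar - ρmin) * (ρ i - ρbar) := by
      nlinarith
    have h2 : (ρbar - ε) / (ρbar - ρmin) * (ρ i - ρbar) ≥ (ρbar - ε) / (ρbar - ρmin) * (ρmin - ρbar) := by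
      have : 0 ≤ (ρbar - ε) / (ρbar - ρmin) := div_nonneg (by linarith) hd.le
      nlinarith
    nlinarith
end

section
/- Let γ > 1 and let w̄, û ∈ ℝ⁴ be states whose first components (densities) are positive. Suppose p(w̄) > 0 and p(û) < 0, and set t = p(w̄)/(p(w̄) − p(û)). Then t ∈ (0,1), and for every s ∈ [0, t] the state s·û + (1−s)·w̄ satisfies p(s·û + (1−s)·w̄) ≥ 0. -/
/-! The pressure is `(γ - 1)` times the total energy minus the kinetic energy `|m|² / (2ρ)`, and
the kinetic energy is a sum of perspectives `m² / ρ` of the square, which are jointly convex in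
`(ρ, m)`. So the pressure is concave on the states of positive density, and along the segment from
`w̄` to `û` it stays above the affine interpolation `(1 - s) p(w̄) + s p(û)`, which vanishes
exactly at `s = t`. -/

/-- Pressure of a 2D Euler state `w = (ρ, m, n, E)`. -/
noncomputable def eulerPressure (γ : ℝ) (w : Fin 4 → ℝ) : ℝ :=
  (γ - 1) * (w 3 - ((w 1) ^ 2 + (w 2) ^ 2) / (2 * w 0))

-- With `x = u X`, `y = v Y`, the gap is `a b u v (X - Y)² / (a u + b v)`: Jensen for the square.
theorem add_sq_div_add_le {u v a b : ℝ} (x y : ℝ) (hu : 0 < u) (hv : 0 < v) (ha : 0 ≤ a)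
    (hb : 0 ≤ b) : (a * x + b * y) ^ 2 / (a * u + b * v) ≤ a * (x ^ 2 / u) + b * (y ^ 2 / v) := by
  obtain ⟨X, rfl⟩ : ∃ X, x = u * X := ⟨x / u, by field_simp⟩
  obtain ⟨Y, rfl⟩ : ∃ Y, y = v * Y := ⟨y / v, by field_simp⟩
  have hX : (u * X) ^ 2 / u = u * X ^ 2 := by field_simp
  have hY : (v * Y) ^ 2 / v = v * Y ^ 2 := by field_simp
  rw [hX, hY]
  refine div_le_of_le_mul₀ (by positivity) (by positivity) ?_
  nlinarith [mul_nonneg (mul_nonneg (mul_nonneg ha hb) (mul_nonneg hu.le hv.le)) (sq_nonneg (X - Y))]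

theorem convex_setOf_pos_apply {ι : Type*} (j : ι) : Convex ℝ {w : ι → ℝ | 0 < w j} :=
  convex_halfSpace_gt (LinearMap.proj j).isLinear 0

theorem convexOn_sq_div_apply {ι : Type*} (i j : ι) :
    ConvexOn ℝ {w : ι → ℝ | 0 < w j} fun w => w i ^ 2 / w j := by
  refine ⟨convex_setOf_pos_apply j, fun u hu v hv a b ha hb _ => ?_⟩
  simpa only [Pi.add_apply, Pi.smul_apply, smul_eq_mul] using
    add_sq_div_add_le (u i) (v i) hu hv ha hb

theorem concaveOn_eulerPressure {γ : ℝ} (hγ : 1 ≤ γ) :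
    ConcaveOn ℝ {w | 0 < w 0} (eulerPressure γ) := by
  have hkinetic : ConvexOn ℝ {w : Fin 4 → ℝ | 0 < w 0}
      fun w => ((w 1) ^ 2 + (w 2) ^ 2) / (2 * w 0) := by
    refine (((convexOn_sq_div_apply 1 0).add (convexOn_sq_div_apply 2 0)).smul
      (c := (1 / 2 : ℝ)) (by norm_num)).congr fun w _ => ?_
    simp only [Pi.add_apply, smul_eq_mul]
    ring
  have henergy := (LinearMap.proj 3 : (Fin 4 → ℝ) →ₗ[ℝ] ℝ).concaveOn (convex_setOf_pos_apply 0)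
  exact (henergy.sub hkinetic).smul (sub_nonneg.2 hγ)

theorem div_sub_mem_Ioo {a b : ℝ} (ha : 0 < a) (hb : b < 0) : a / (a - b) ∈ Set.Ioo 0 1 :=
  ⟨div_pos ha (by linarith), (div_lt_one (by linarith)).2 (by linarith)⟩

theorem ConcaveOn.nonneg_of_le_div_sub {𝕜 E : Type*} [Field 𝕜] [LinearOrder 𝕜]
    [IsStrictOrderedRing 𝕜] [AddCommGroup E] [Module 𝕜 E] {S : Set E} {f : E → 𝕜} {x y : E}
    {s : 𝕜} (hf : ConcaveOn 𝕜 S f) (hx : x ∈ S) (hy : y ∈ S) (hlt : f y < f x) (hs0 : 0 ≤ s)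
    (hs1 : s ≤ 1) (hst : s ≤ f x / (f x - f y)) : 0 ≤ f (s • y + (1 - s) • x) := by
  have hinterp : 0 ≤ s * f y + (1 - s) * f x := by
    rw [le_div_iff₀ (sub_pos.2 hlt)] at hst
    linarith
  exact hinterp.trans (hf.2 hy hx hs0 (sub_nonneg.2 hs1) (add_sub_cancel s 1))

/-- The scaling value of the second step of the Zhang–Shu limiter: if `p(w̄) > 0`
and `p(û) < 0` then `t = p(w̄)/(p(w̄) − p(û)) ∈ (0,1)` and the pressure of the
convex combination `s·û + (1−s)·w̄` is nonnegative for every `s ∈ [0, t]`. -/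
theorem zhangShu_pressure_scaling (γ : ℝ) (hγ : 1 < γ)
    (wbar uhat : Fin 4 → ℝ) (hwbar : 0 < wbar 0) (huhat : 0 < uhat 0)
    (hpbar : 0 < eulerPressure γ wbar) (hphat : eulerPressure γ uhat < 0)
    (t : ℝ) (ht : t = eulerPressure γ wbar / (eulerPressure γ wbar - eulerPressure γ uhat)) :
    (0 < t ∧ t < 1) ∧
      ∀ s, 0 ≤ s → s ≤ t → 0 ≤ eulerPressure γ (s • uhat + (1 - s) • wbar) := by
  subst ht
  have ht01 := div_sub_mem_Ioo hpbar hphat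
  refine ⟨ht01, fun s hs0 hst => ?_⟩
  exact (concaveOn_eulerPressure hγ.le).nonneg_of_le_div_sub hwbar huhat
    (hphat.trans hpbar) hs0 (hst.trans ht01.2.le) hst
end

section
/- Let γ > 1, let u₁, …, u_N ∈ ℝ⁴ be node states with positive densities, let ω₁, …, ω_N be positive weights with Σᵢ ωᵢ = 1, and let w̄ = Σᵢ ωᵢ uᵢ satisfy p(w̄) > 0 (so in particular w̄ has positive density). For each i set tᵢ = 1 if p(uᵢ) ≥ 0 and tᵢ = p(w̄)/(p(w̄) − p(uᵢ)) otherwise, and let θ₂ = minᵢ tᵢ. Then the limited node states ũᵢ = θ₂(uᵢ − w̄) + w̄ satisfy, for every i: the density of ũᵢ is positive and p(ũᵢ) ≥ 0; moreover Σᵢ ωᵢ ũᵢ = w̄. -/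
private lemma quadlin (x y p q θ : ℝ) (hp : 0 < p) (hq : 0 < q) (h0 : 0 ≤ θ) (h1 : θ ≤ 1) :
    (θ * x + (1 - θ) * y) ^ 2 / (θ * p + (1 - θ) * q) ≤ θ * (x ^ 2 / p) + (1 - θ) * (y ^ 2 / q) := by
  have hd : 0 < θ * p + (1 - θ) * q := by
    rcases lt_or_eq_of_le h0 with h | h
    · nlinarith [mul_pos h hp, mul_nonneg (sub_nonneg.2 h1) hq.le]
    · rw [← h]; simpa using hq
  have h2 : θ * (x ^ 2 / p) + (1 - θ) * (y ^ 2 / q)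
      = (θ * x ^ 2 * q + (1 - θ) * y ^ 2 * p) / (p * q) := by
    field_simp
  rw [h2, div_le_div_iff₀ hd (mul_pos hp hq)]
  nlinarith [mul_nonneg (mul_nonneg h0 (sub_nonneg.2 h1)) (sq_nonneg (x * q - y * p))]

private lemma pressure_concave (γ : ℝ) (hγ : 1 < γ) (a b : Fin 4 → ℝ)
    (ha : 0 < a 0) (hb : 0 < b 0) (θ : ℝ) (h0 : 0 ≤ θ) (h1 : θ ≤ 1) :
    θ * eulerPressure γ a + (1 - θ) * eulerPressure γ b
      ≤ eulerPressure γ (θ • a + (1 - θ) • b) := by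
  have h1' := quadlin (a 1) (b 1) (2 * a 0) (2 * b 0) θ (by linarith) (by linarith) h0 h1
  have h2' := quadlin (a 2) (b 2) (2 * a 0) (2 * b 0) θ (by linarith) (by linarith) h0 h1
  have e : θ * (2 * a 0) + (1 - θ) * (2 * b 0) = 2 * (θ * a 0 + (1 - θ) * b 0) := by ring
  rw [e] at h1' h2'
  have hD : 0 < 2 * (θ * a 0 + (1 - θ) * b 0) := by
    rcases lt_or_eq_of_le h0 with h | h
    · nlinarith [mul_pos h ha, mul_nonneg (sub_nonneg.2 h1) hb.le]
    · rw [← h]; simpa using hb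
  unfold eulerPressure
  simp only [Pi.add_apply, Pi.smul_apply, smul_eq_mul]
  have key : θ * (a 3 - (a 1 ^ 2 + a 2 ^ 2) / (2 * a 0))
      + (1 - θ) * (b 3 - (b 1 ^ 2 + b 2 ^ 2) / (2 * b 0))
      ≤ (θ * a 3 + (1 - θ) * b 3)
        - ((θ * a 1 + (1 - θ) * b 1) ^ 2 + (θ * a 2 + (1 - θ) * b 2) ^ 2)
          / (2 * (θ * a 0 + (1 - θ) * b 0)) := by
    have split1 : (a 1 ^ 2 + a 2 ^ 2) / (2 * a 0) = a 1 ^ 2 / (2 * a 0) + a 2 ^ 2 / (2 * a 0) :=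
      add_div _ _ _
    have split2 : (b 1 ^ 2 + b 2 ^ 2) / (2 * b 0) = b 1 ^ 2 / (2 * b 0) + b 2 ^ 2 / (2 * b 0) :=
      add_div _ _ _
    have split3 : ((θ * a 1 + (1 - θ) * b 1) ^ 2 + (θ * a 2 + (1 - θ) * b 2) ^ 2)
        / (2 * (θ * a 0 + (1 - θ) * b 0))
        = (θ * a 1 + (1 - θ) * b 1) ^ 2 / (2 * (θ * a 0 + (1 - θ) * b 0))
          + (θ * a 2 + (1 - θ) * b 2) ^ 2 / (2 * (θ * a 0 + (1 - θ) * b 0)) := add_div _ _ _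
    rw [split1, split2, split3, mul_sub, mul_sub, mul_add, mul_add]
    linarith
  nlinarith [key, sub_pos.2 hγ]

/-- The second (pressure) step of the Zhang–Shu positivity-preserving limiter:
scaling all node states toward the cell average `w̄` by `θ₂ = minᵢ tᵢ` yields node
states with positive density and nonnegative pressure, and preserves the cell
average. -/
theorem zhangShu_pressure_limiter (γ : ℝ) (hγ : 1 < γ) {N : ℕ}
    (hne : (Finset.univ : Finset (Fin N)).Nonempty)
    (u : Fin N → (Fin 4 → ℝ)) (hρ : ∀ i, 0 < u i 0)
    (ω : Fin N → ℝ) (hω : ∀ i, 0 < ω i) (hsum : ∑ i, ω i = 1)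
    (wbar : Fin 4 → ℝ) (hbar : wbar = ∑ i, ω i • u i)
    (hpbar : 0 < eulerPressure γ wbar)
    (t : Fin N → ℝ)
    (ht : ∀ i, t i = if 0 ≤ eulerPressure γ (u i) then 1
      else eulerPressure γ wbar / (eulerPressure γ wbar - eulerPressure γ (u i)))
    (θ₂ : ℝ) (hθ₂ : θ₂ = Finset.univ.inf' hne t) :
    (∀ i, 0 < (θ₂ • (u i - wbar) + wbar) 0 ∧
        0 ≤ eulerPressure γ (θ₂ • (u i - wbar) + wbar)) ∧
      ∑ i, ω i • (θ₂ • (u i - wbar) + wbar) = wbar := by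
  -- density of the average is positive
  have hρbar : 0 < wbar 0 := by
    rw [hbar]
    rw [Finset.sum_apply]
    exact Finset.sum_pos (fun i _ => by
      simpa [smul_eq_mul] using mul_pos (hω i) (hρ i)) hne
  -- each t i ∈ (0, 1]
  have htpos : ∀ i, 0 < t i := by
    intro i
    rw [ht i]
    split_ifs with h
    · norm_num
    · push_neg at h
      exact div_pos hpbar (by linarith)
  have htle : ∀ i, t i ≤ 1 := by
    intro i
    rw [ht i]
    split_ifs with h
    · exact le_rfl
    · push_neg at h
      rw [div_le_one (by linarith)]
      linarith
  have hθpos : 0 < θ₂ := by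
    rw [hθ₂]
    exact (Finset.lt_inf'_iff hne).2 fun i _ => htpos i
  have hθ0 : 0 ≤ θ₂ := hθpos.le
  have hθle : θ₂ ≤ 1 := by
    obtain ⟨j, hj⟩ := hne
    calc θ₂ ≤ t j := hθ₂ ▸ Finset.inf'_le t hj
    _ ≤ 1 := htle j
  have hθlet : ∀ i, θ₂ ≤ t i := fun i => hθ₂ ▸ Finset.inf'_le t (Finset.mem_univ i)
  have hconv : ∀ i, θ₂ • (u i - wbar) + wbar = θ₂ • u i + (1 - θ₂) • wbar := by
    intro i; funext k
    simp only [Pi.add_apply, Pi.smul_apply, Pi.sub_apply, smul_eq_mul]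
    ring
  constructor
  · intro i
    constructor
    · simp only [Pi.add_apply, Pi.smul_apply, Pi.sub_apply, smul_eq_mul]
      nlinarith [hρ i, hρbar]
    · rw [hconv i]
      have hcc := pressure_concave γ hγ (u i) wbar (hρ i) hρbar θ₂ hθ0 hθle
      have hlow : 0 ≤ θ₂ * eulerPressure γ (u i) + (1 - θ₂) * eulerPressure γ wbar := by
        by_cases h : 0 ≤ eulerPressure γ (u i)
        · nlinarith
        · push_neg at h
          have hti := hθlet i
          rw [ht i, if_neg (not_le.2 h)] at hti
          rw [le_div_iff₀ (by linarith)] at hti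
          nlinarith
      linarith
  · rw [hbar]
    have : ∀ i, ω i • (θ₂ • (u i - (∑ j, ω j • u j)) + (∑ j, ω j • u j))
        = θ₂ • (ω i • u i) - (θ₂ * ω i) • (∑ j, ω j • u j) + ω i • (∑ j, ω j • u j) := by
      intro i; funext k
      simp only [Pi.add_apply, Pi.smul_apply, Pi.sub_apply, smul_eq_mul]
      ring
    simp only [this]
    rw [Finset.sum_add_distrib, Finset.sum_sub_distrib, ← Finset.smul_sum,
      ← Finset.sum_smul, ← Finset.sum_smul, ← Finset.mul_sum, hsum]
    module
end
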